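/- Let Φ : 𝓔 → 𝓔' be a functor between Grothendieck categories possessing a right adjoint Ψ. Suppose that Ψ commutes with filtered colimits and that both Φ and Ψ are exact. Then Φ preserves pf_n objects for every n ∈ ℕ ∪ {∞}. -/

import Mathlib

/-!
Statement 5: an exact functor between Grothendieck categories admitting an exact right
adjoint which commutes with filtered colimits preserves `pf_n` objects, for every
`n ∈ ℕ ∪ {∞}`.
-/

universe w v u

open CategoryTheory Limits

namespace Paper

variable {C : Type u} [Category.{v} C] [Abelian C] [CategoryTheory.HasExt.{w} C]

/-- The canonical comparison map `colim_j Ext^i(X, Φ j) ⟶ Ext^i(X, c.pt)` associated to a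
cocone `c` on `Φ`. -/
noncomputable def extCompare (X : C) (i : ℕ) {I : Type w} [SmallCategory I] (Φ : I ⥤ C)
    [HasColimit (Φ ⋙ Abelian.extFunctorObj.{w} X i)] (c : Cocone Φ) :
    colimit (Φ ⋙ Abelian.extFunctorObj.{w} X i) ⟶ (Abelian.extFunctorObj.{w} X i).obj c.pt :=
  colimit.desc _ ((Abelian.extFunctorObj.{w} X i).mapCocone c)

/-- `X` is of `n`-finite presentation (`pf_n`): for every filtered colimit, the canonical map
`colim Ext^i(X, Φ ·) → Ext^i(X, colim Φ)` is bijective for `i < n` and injective for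
`i < n + 1`. -/
def IsPF (n : ℕ∞) (X : C) : Prop :=
  ∀ (I : Type w) (_ : SmallCategory I), IsFiltered I →
    ∀ (Φ : I ⥤ C) (c : Cocone Φ), IsColimit c →
      ∀ (i : ℕ),
        ((i : ℕ∞) < n → Function.Bijective (extCompare X i Φ c)) ∧
        ((i : ℕ∞) < n + 1 → Function.Injective (extCompare X i Φ c))


universe w₁ w₂ v₁ v₂ u₁ u₂ u'

section Aux
section

variable {C : Type u₁} [Category.{v₁} C] [Abelian C]
  {D : Type u₂} [Category.{v₂} D] [Abelian D]

noncomputable def mapComplexAdjunction (Φ : C ⥤ D) (Ψ : D ⥤ C) (adj : Φ ⊣ Ψ)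
    [Φ.PreservesZeroMorphisms] [Ψ.PreservesZeroMorphisms] :
    Φ.mapHomologicalComplex (ComplexShape.up ℤ) ⊣ Ψ.mapHomologicalComplex (ComplexShape.up ℤ) :=
  Adjunction.mkOfUnitCounit
    { unit :=
        { app := fun K =>
            { f := fun n => adj.unit.app (K.X n)
              comm' := fun i j _ => by exact (adj.unit.naturality (K.d i j)).symm }
          naturality := fun K L φ => by
            ext n
            exact adj.unit.naturality (φ.f n) }
      counit :=
        { app := fun K =>
            { f := fun n => adj.counit.app (K.X n)
              comm' := fun i j _ => by exact (adj.counit.naturality (K.d i j)).symm }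
          naturality := fun K L φ => by
            ext n
            exact adj.counit.naturality (φ.f n) }
      left_triangle := by
        ext K n
        simp [-Adjunction.left_triangle_components]; exact adj.left_triangle_components (K.X n)
      right_triangle := by
        ext K n
        simp [-Adjunction.right_triangle_components]; exact adj.right_triangle_components (K.X n) }

noncomputable def mapDerivedCatCommSq (F : C ⥤ D) [F.Additive]
    [PreservesFiniteLimits F] [PreservesFiniteColimits F]
    [HasDerivedCategory.{w₁} C] [HasDerivedCategory.{w₂} D] :
    CatCommSq (F.mapHomologicalComplex (ComplexShape.up ℤ))
      DerivedCategory.Q DerivedCategory.Q F.mapDerivedCategory :=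
  ⟨F.mapDerivedCategoryFactors.symm⟩

noncomputable def mapDerivedCategoryAdjunction (Φ : C ⥤ D) (Ψ : D ⥤ C) (adj : Φ ⊣ Ψ)
    [Φ.Additive] [Ψ.Additive]
    [PreservesFiniteLimits Φ] [PreservesFiniteColimits Φ]
    [PreservesFiniteLimits Ψ] [PreservesFiniteColimits Ψ]
    [HasDerivedCategory.{w₁} C] [HasDerivedCategory.{w₂} D] :
    Φ.mapDerivedCategory ⊣ Ψ.mapDerivedCategory :=
  letI := mapDerivedCatCommSq.{w₁, w₂} Φ
  letI := mapDerivedCatCommSq.{w₂, w₁} Ψ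
  (mapComplexAdjunction Φ Ψ adj).localization
    DerivedCategory.Q (HomologicalComplex.quasiIso C (ComplexShape.up ℤ))
    DerivedCategory.Q (HomologicalComplex.quasiIso D (ComplexShape.up ℤ))
    Φ.mapDerivedCategory Ψ.mapDerivedCategory

noncomputable def mapDerivedCategorySingleIso (F : C ⥤ D) [F.Additive]
    [PreservesFiniteLimits F] [PreservesFiniteColimits F]
    [HasDerivedCategory.{w₁} C] [HasDerivedCategory.{w₂} D] :
    DerivedCategory.singleFunctor C 0 ⋙ F.mapDerivedCategory ≅
      F ⋙ DerivedCategory.singleFunctor D 0 :=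
  Functor.isoWhiskerRight ((SingleFunctors.evaluation _ _ 0).mapIso
      (DerivedCategory.singleFunctorsPostcompQIso C)) F.mapDerivedCategory ≪≫
  Functor.associator _ _ _ ≪≫
  Functor.isoWhiskerLeft _ F.mapDerivedCategoryFactors ≪≫
  (Functor.associator _ _ _).symm ≪≫
  Functor.isoWhiskerRight (HomologicalComplex.singleMapHomologicalComplex F (ComplexShape.up ℤ) 0)
    DerivedCategory.Q ≪≫
  Functor.associator _ _ _ ≪≫
  Functor.isoWhiskerLeft F ((SingleFunctors.evaluation _ _ 0).mapIso
      (DerivedCategory.singleFunctorsPostcompQIso D)).symm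

section ExtAdj

open DerivedCategory Abelian

variable [HasExt.{w} C] [HasExt.{w} D]
  [HasDerivedCategory.{w₁} C] [HasDerivedCategory.{w₂} D]
  (Φ : C ⥤ D) (Ψ : D ⥤ C) (adj : Φ ⊣ Ψ) [Φ.Additive] [Ψ.Additive]
  [PreservesFiniteLimits Φ] [PreservesFiniteColimits Φ]
  [PreservesFiniteLimits Ψ] [PreservesFiniteColimits Ψ]

noncomputable def shiftedHomAdj (X : C) (Y : D) (i : ℤ) :
    ShiftedHom ((singleFunctor D 0).obj (Φ.obj X)) ((singleFunctor D 0).obj Y) i ≃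
      ShiftedHom ((singleFunctor C 0).obj X) ((singleFunctor C 0).obj (Ψ.obj Y)) i :=
  (((mapDerivedCategorySingleIso Φ).app X).homFromEquiv.symm).trans
    (((mapDerivedCategoryAdjunction Φ Ψ adj).homEquiv _ _).trans
      (((Ψ.mapDerivedCategory.commShiftIso i).app ((singleFunctor D 0).obj Y) ≪≫
        (shiftFunctor (DerivedCategory C) i).mapIso
          ((mapDerivedCategorySingleIso Ψ).app Y)).homToEquiv))

lemma shiftedHomAdj_apply (X : C) (Y : D) (i : ℤ)
    (γ : ShiftedHom ((singleFunctor D 0).obj (Φ.obj X)) ((singleFunctor D 0).obj Y) i) :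
    shiftedHomAdj Φ Ψ adj X Y i γ =
      ((mapDerivedCategoryAdjunction Φ Ψ adj).homEquiv _ _)
          ((mapDerivedCategorySingleIso Φ).hom.app X ≫ γ) ≫
        ((Ψ.mapDerivedCategory.commShiftIso i).hom.app ((singleFunctor D 0).obj Y) ≫
          (shiftFunctor (DerivedCategory C) i).map ((mapDerivedCategorySingleIso Ψ).hom.app Y)) :=
  rfl


noncomputable def extAdjEquiv (X : C) (Y : D) (n : ℕ) :
    Abelian.Ext.{w} (Φ.obj X) Y n ≃ Abelian.Ext.{w} X (Ψ.obj Y) n :=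
  Ext.homEquiv.trans ((shiftedHomAdj Φ Ψ adj X Y n).trans Ext.homEquiv.symm)

lemma extAdjEquiv_hom (X : C) (Y : D) (n : ℕ) (α : Abelian.Ext.{w} (Φ.obj X) Y n) :
    (extAdjEquiv Φ Ψ adj X Y n α).hom = shiftedHomAdj Φ Ψ adj X Y n α.hom :=
  Equiv.apply_symm_apply _ _

lemma extAdjEquiv_add (X : C) (Y : D) (n : ℕ) (α β : Abelian.Ext.{w} (Φ.obj X) Y n) :
    extAdjEquiv Φ Ψ adj X Y n (α + β) =
      extAdjEquiv Φ Ψ adj X Y n α + extAdjEquiv Φ Ψ adj X Y n β := by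
  apply Ext.ext
  rw [Ext.add_hom, extAdjEquiv_hom, extAdjEquiv_hom, extAdjEquiv_hom, Ext.add_hom]
  haveI : Ψ.mapDerivedCategory.Additive := inferInstance
  simp only [shiftedHomAdj_apply, Adjunction.homEquiv_unit]
  erw [Preadditive.comp_add]
  rw [Functor.map_add, Preadditive.comp_add, Preadditive.add_comp]

lemma extAdjEquiv_naturality (X : C) {Y Y' : D} (f : Y ⟶ Y') (n : ℕ)
    (α : Abelian.Ext.{w} (Φ.obj X) Y n) :
    extAdjEquiv Φ Ψ adj X Y' n (α.comp (Abelian.Ext.mk₀ f) (add_zero n)) =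
      (extAdjEquiv Φ Ψ adj X Y n α).comp (Abelian.Ext.mk₀ (Ψ.map f)) (add_zero n) := by
  apply Ext.ext
  rw [extAdjEquiv_hom, Ext.comp_hom, Ext.comp_hom, Ext.mk₀_hom, Ext.mk₀_hom,
    ShiftedHom.comp_mk₀, ShiftedHom.comp_mk₀, extAdjEquiv_hom]
  rw [shiftedHomAdj_apply, shiftedHomAdj_apply]
  rw [← Category.assoc ((mapDerivedCategorySingleIso Φ).hom.app X) α.hom,
    Adjunction.homEquiv_naturality_right]
  simp only [Category.assoc]
  erw [(Ψ.mapDerivedCategory.commShiftIso ((n : ℕ) : ℤ)).hom.naturality_assoc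
    ((DerivedCategory.singleFunctor D 0).map f)]
  simp only [Functor.comp_map]
  rw [← Functor.map_comp, ← Functor.map_comp]
  congr 3
  exact (mapDerivedCategorySingleIso Ψ).hom.naturality f


end ExtAdj
end
end Aux

theorem statement5 {C : Type u} [Category.{v} C] [Abelian C]
    [HasColimits C] [AB5 C] [HasSeparator C] [CategoryTheory.HasExt.{v} C]
    {D : Type u'} [Category.{v} D] [Abelian D]
    [HasColimits D] [AB5 D] [HasSeparator D] [CategoryTheory.HasExt.{v} D]
    (Φ : C ⥤ D) (Ψ : D ⥤ C) (adj : Φ ⊣ Ψ)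
    -- `Ψ` commutes with filtered colimits
    [PreservesFilteredColimits Ψ]
    -- `Φ` and `Ψ` are exact
    [PreservesFiniteLimits Φ] [PreservesFiniteColimits Φ]
    [PreservesFiniteLimits Ψ] [PreservesFiniteColimits Ψ]
    (n : ℕ∞) (X : C) (hX : IsPF.{v} n X) :
    IsPF.{v} n (Φ.obj X) := by
  intro I instI hI Φ' c hc i
  haveI := hI
  letI := HasDerivedCategory.standard C
  letI := HasDerivedCategory.standard D
  haveI := adj.isLeftAdjoint
  haveI := adj.isRightAdjoint
  haveI : Φ.Additive := Functor.additive_of_preserves_binary_products Φ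
  haveI : Ψ.Additive := Functor.additive_of_preserves_binary_products Ψ
  have hc' : IsColimit (Ψ.mapCocone c) := isColimitOfPreserves Ψ hc
  have hXres := hX I instI hI (Φ' ⋙ Ψ) (Ψ.mapCocone c) hc' i
  let N : Φ' ⋙ Abelian.extFunctorObj.{v} (Φ.obj X) i ≅
      (Φ' ⋙ Ψ) ⋙ Abelian.extFunctorObj.{v} X i :=
    NatIso.ofComponents
      (fun j => (AddEquiv.mk' (extAdjEquiv Φ Ψ adj X (Φ'.obj j) i)
        (extAdjEquiv_add Φ Ψ adj X (Φ'.obj j) i)).toAddCommGrpIso)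
      (fun {j j'} g => by
        ext α
        exact extAdjEquiv_naturality Φ Ψ adj X (Φ'.map g) i α)
  let ec : (Abelian.extFunctorObj.{v} (Φ.obj X) i).obj c.pt ≅
      (Abelian.extFunctorObj.{v} X i).obj (Ψ.obj c.pt) :=
    (AddEquiv.mk' (extAdjEquiv Φ Ψ adj X c.pt i)
      (extAdjEquiv_add Φ Ψ adj X c.pt i)).toAddCommGrpIso
  have key : extCompare (Φ.obj X) i Φ' c ≫ ec.hom =
      (HasColimit.isoOfNatIso N).hom ≫ extCompare X i (Φ' ⋙ Ψ) (Ψ.mapCocone c) := by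
    apply colimit.hom_ext
    intro j
    rw [extCompare, extCompare, colimit.ι_desc_assoc, HasColimit.isoOfNatIso_ι_hom_assoc,
      colimit.ι_desc]
    ext α
    exact extAdjEquiv_naturality Φ Ψ adj X (c.ι.app j) i α
  have heq : extCompare (Φ.obj X) i Φ' c =
      (HasColimit.isoOfNatIso N).hom ≫ extCompare X i (Φ' ⋙ Ψ) (Ψ.mapCocone c) ≫ ec.inv := by
    rw [← Category.assoc, ← key, Category.assoc, Iso.hom_inv_id, Category.comp_id]
  have b1 : Function.Bijective ((HasColimit.isoOfNatIso N).hom) :=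
    ((forget AddCommGrpCat).mapIso (HasColimit.isoOfNatIso N)).toEquiv.bijective
  have b2 : Function.Bijective (ec.inv) :=
    ((forget AddCommGrpCat).mapIso ec.symm).toEquiv.bijective
  have hcoe : ⇑((HasColimit.isoOfNatIso N).hom ≫
      extCompare X i (Φ' ⋙ Ψ) (Ψ.mapCocone c) ≫ ec.inv) =
      ⇑ec.inv ∘ ⇑(extCompare X i (Φ' ⋙ Ψ) (Ψ.mapCocone c)) ∘
        ⇑(HasColimit.isoOfNatIso N).hom := rfl
  constructor
  · intro hi
    rw [heq, hcoe]
    exact b2.comp ((hXres.1 hi).comp b1)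
  · intro hi
    rw [heq, hcoe]
    exact b2.injective.comp ((hXres.2 hi).comp b1.injective)

end Paper
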